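/- Let A be a superalgebra and φ: M → N an epimorphism of free A-supermodules of the same finite rank (r, s), where A is supercommutative over a field of characteristic ≠ 2. Then φ is an isomorphism. -/

import Mathlib

/-!
Modulo the ideal `J` generated by the odd elements, a supercommutative algebra becomes
commutative, hence stably finite. So if `S * R = 1` for square matrices over `A`, the idempotent
`1 - R * S` has entries in `J`, in fact in the ideal generated by finitely many odd elements
`v₁, …, vₘ`. As `2 ≠ 0`, odd elements square to zero and anticommute, so every product of `m + 1`
of them vanishes; thus `1 - R * S` is nilpotent, hence zero, and `A` is stably finite. Over a
stably finite ring, surjective endomorphisms of finite free modules are injective.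
-/

theorem Submodule.top_mul_pow_le {K A : Type*} [CommSemiring K] [Semiring A] [Algebra K A]
    (W : Submodule K A) (hW : W * ⊤ ≤ ⊤ * W) (k : ℕ) : (⊤ * W) ^ k ≤ ⊤ * W ^ k := by
  have hpow : ∀ m : ℕ, W ^ m * ⊤ ≤ ⊤ * W ^ m := by
    intro m
    induction m with
    | zero => simp
    | succ m ih =>
      calc W ^ (m + 1) * ⊤ = W ^ m * (W * ⊤) := by rw [pow_succ, mul_assoc]
        _ ≤ W ^ m * (⊤ * W) := mul_le_mul_right hW _
        _ = W ^ m * ⊤ * W := by rw [mul_assoc]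
        _ ≤ ⊤ * W ^ m * W := mul_le_mul_left ih _
        _ = ⊤ * W ^ (m + 1) := by rw [pow_succ, mul_assoc]
  induction k with
  | zero => simp
  | succ k ih =>
    calc (⊤ * W) ^ (k + 1) = (⊤ * W) ^ k * (⊤ * W) := pow_succ _ _
      _ ≤ ⊤ * W ^ k * (⊤ * W) := mul_le_mul_left ih _
      _ = ⊤ * (W ^ k * ⊤) * W := by simp only [mul_assoc]
      _ ≤ ⊤ * (⊤ * W ^ k) * W := mul_le_mul_left (mul_le_mul_right (hpow k) _) _
      _ ≤ ⊤ * W ^ (k + 1) := by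
        rw [← mul_assoc, pow_succ, ← mul_assoc]
        exact mul_le_mul_left (mul_le_mul_left le_top _) _

theorem Matrix.pow_apply_mem_pow {K A n : Type*} [CommSemiring K] [Semiring A] [Algebra K A]
    [Fintype n] [DecidableEq n] {I : Submodule K A} {F : Matrix n n A} (hF : ∀ i j, F i j ∈ I)
    (k : ℕ) (i j : n) : (F ^ k) i j ∈ I ^ k := by
  induction k generalizing j with
  | zero =>
    rw [pow_zero, pow_zero, Matrix.one_apply]
    split_ifs
    · exact Submodule.one_le.mp le_rfl
    · exact zero_mem _
  | succ k ih =>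
    rw [pow_succ, pow_succ, Matrix.mul_apply]
    exact sum_mem fun l _ ↦ Submodule.mul_mem_mul (ih l) (hF l j)

theorem Ideal.exists_finset_subset_mem_top_mul_span {K A : Type*} [CommSemiring K] [Semiring A]
    [Algebra K A] {s : Set A} {x : A} (hx : x ∈ span s) :
    ∃ V : Finset A, ↑V ⊆ s ∧ x ∈ ⊤ * Submodule.span K (V : Set A) := by
  obtain ⟨c, hcs, rfl⟩ := Submodule.mem_span_set.mp hx
  refine ⟨c.support, hcs, Submodule.sum_mem _ fun v hv ↦ ?_⟩
  exact Submodule.mul_mem_mul Submodule.mem_top (Submodule.subset_span hv)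

theorem IsDedekindFiniteMonoid.of_ringHom_of_isNilpotent {R S : Type*} [Ring R] [Ring S]
    [IsDedekindFiniteMonoid S] (f : R →+* S) (hf : ∀ x, f x = 0 → IsNilpotent x) :
    IsDedekindFiniteMonoid R where
  mul_eq_one_symm {x y} hxy := by
    have hyx : f y * f x = 1 := mul_eq_one_symm (by rw [← map_mul, hxy, map_one])
    have hidem : IsIdempotentElem (y * x) := by
      rw [IsIdempotentElem, mul_assoc, ← mul_assoc x, hxy, one_mul]
    have hzero := hidem.one_sub.eq_zero_of_isNilpotent
      (hf _ (by rw [map_sub, map_one, map_mul, hyx, sub_self]))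
    exact (sub_eq_zero.mp hzero).symm

theorem isStablyFiniteRing_of_mul_comm {R : Type*} [Ring R] (h : ∀ x y : R, x * y = y * x) :
    IsStablyFiniteRing R :=
  letI : CommRing R := { ‹Ring R› with mul_comm := h }
  inferInstance

def IsSupercommutative {K A : Type*} [CommRing K] [Ring A] [Algebra K A]
    (𝒜 : ZMod 2 → Submodule K A) : Prop :=
  ∀ (i j : ZMod 2) (a b : A), a ∈ 𝒜 i → b ∈ 𝒜 j → a * b = ((-1 : K) ^ (i.val * j.val)) • (b * a)

theorem exists_sub_mem_span_odd {K A : Type*} [CommRing K] [Ring A] [Algebra K A]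
    (𝒜 : ZMod 2 → Submodule K A) [DirectSum.Decomposition 𝒜] (a : A) :
    ∃ a₀ ∈ 𝒜 0, a - a₀ ∈ Ideal.span (𝒜 1 : Set A) := by
  induction a using DirectSum.Decomposition.inductionOn 𝒜 with
  | zero => exact ⟨0, zero_mem _, by simp⟩
  | @homogeneous i m =>
    match i, m with
    | 0, m => exact ⟨m, m.2, by simp⟩
    | 1, m => exact ⟨0, zero_mem _, by simpa using Ideal.subset_span m.2⟩
  | add a b ha hb =>
    obtain ⟨a₀, ha₀, ha⟩ := ha
    obtain ⟨b₀, hb₀, hb⟩ := hb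
    exact ⟨a₀ + b₀, add_mem ha₀ hb₀, by simpa [add_sub_add_comm] using add_mem ha hb⟩

namespace IsSupercommutative

section CommRing

variable {K A : Type*} [CommRing K] [Ring A] [Algebra K A] {𝒜 : ZMod 2 → Submodule K A}
  (h𝒜 : IsSupercommutative 𝒜)
include h𝒜

theorem mul_comm_of_even {a b : A} (ha : a ∈ 𝒜 0) (hb : b ∈ 𝒜 0) : a * b = b * a := by
  simpa using h𝒜 0 0 a b ha hb

variable [DirectSum.Decomposition 𝒜]

theorem exists_mul_eq_mul_of_odd {v : A} (hv : v ∈ 𝒜 1) (a : A) : ∃ c, v * a = c * v := by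
  induction a using DirectSum.Decomposition.inductionOn 𝒜 with
  | zero => exact ⟨0, by simp⟩
  | @homogeneous j m =>
    exact ⟨((-1 : K) ^ ((1 : ZMod 2).val * j.val)) • (m : A), by
      rw [h𝒜 1 j v m hv m.2, smul_mul_assoc]⟩
  | add a b ha hb =>
    obtain ⟨c, hc⟩ := ha
    obtain ⟨d, hd⟩ := hb
    exact ⟨c + d, by rw [mul_add, hc, hd, add_mul]⟩

theorem mul_top_le_top_mul {W : Submodule K A} (hW : W ≤ 𝒜 1) : W * ⊤ ≤ ⊤ * W :=
  Submodule.mul_le.mpr fun w hw a _ ↦ by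
    obtain ⟨c, hc⟩ := h𝒜.exists_mul_eq_mul_of_odd (hW hw) a
    exact hc ▸ Submodule.mul_mem_mul Submodule.mem_top hw

theorem isTwoSided_span_odd : (Ideal.span (𝒜 1 : Set A)).IsTwoSided where
  mul_mem_of_left b hx := by
    induction hx using Submodule.span_induction with
    | mem v hv =>
      obtain ⟨c, hc⟩ := h𝒜.exists_mul_eq_mul_of_odd hv b
      exact hc ▸ Ideal.mul_mem_left _ c (Ideal.subset_span hv)
    | zero => simp
    | add x y _ _ hx hy => exact add_mul x y b ▸ add_mem hx hy
    | smul a x _ hx => exact (smul_mul_assoc a x b).symm ▸ Ideal.mul_mem_left _ a hx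

theorem quotient_mul_comm [(Ideal.span (𝒜 1 : Set A)).IsTwoSided]
    (x y : A ⧸ Ideal.span (𝒜 1 : Set A)) : x * y = y * x := by
  obtain ⟨a, rfl⟩ := Ideal.Quotient.mk_surjective x
  obtain ⟨b, rfl⟩ := Ideal.Quotient.mk_surjective y
  obtain ⟨a₀, ha₀, ha⟩ := exists_sub_mem_span_odd 𝒜 a
  obtain ⟨b₀, hb₀, hb⟩ := exists_sub_mem_span_odd 𝒜 b
  rw [← Ideal.Quotient.eq] at ha hb
  rw [ha, hb, ← map_mul, ← map_mul, h𝒜.mul_comm_of_even ha₀ hb₀]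

end CommRing

section Field

variable {K A : Type*} [Field K] [Ring A] [Algebra K A] {𝒜 : ZMod 2 → Submodule K A}
  (h𝒜 : IsSupercommutative 𝒜)
include h𝒜

theorem mul_self_eq_zero_of_odd (hK : (2 : K) ≠ 0) {v : A} (hv : v ∈ 𝒜 1) : v * v = 0 := by
  have hneg : v * v = -(v * v) := by
    simpa [show (1 : ZMod 2).val = 1 from rfl] using h𝒜 1 1 v v hv hv
  have htwo : (2 : K) • (v * v) = 0 := by
    rw [two_smul]
    nth_rewrite 1 [hneg]
    exact neg_add_cancel _
  exact (smul_eq_zero.mp htwo).resolve_left hK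

variable [DirectSum.Decomposition 𝒜]

theorem mul_mul_self_eq_zero_of_odd (hK : (2 : K) ≠ 0) {v : A} (hv : v ∈ 𝒜 1) (a : A) :
    v * a * v = 0 := by
  obtain ⟨c, hc⟩ := h𝒜.exists_mul_eq_mul_of_odd hv a
  rw [hc, mul_assoc, h𝒜.mul_self_eq_zero_of_odd hK hv, mul_zero]

theorem list_prod_eq_zero_of_not_nodup (hK : (2 : K) ≠ 0) {l : List A}
    (hl : ∀ x ∈ l, x ∈ 𝒜 1) (hnd : ¬ l.Nodup) : l.prod = 0 := by
  induction l with
  | nil => exact absurd List.nodup_nil hnd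
  | cons v t ih =>
    rw [List.prod_cons]
    by_cases hvt : v ∈ t
    · obtain ⟨s, u, rfl⟩ := List.mem_iff_append.mp hvt
      rw [List.prod_append, List.prod_cons, ← mul_assoc, ← mul_assoc,
        h𝒜.mul_mul_self_eq_zero_of_odd hK (hl v List.mem_cons_self), zero_mul]
    · rw [ih (fun x hx ↦ hl x (List.mem_cons_of_mem v hx))
        (fun ht ↦ hnd (List.nodup_cons.mpr ⟨hvt, ht⟩)), mul_zero]

theorem span_pow_card_succ_eq_bot (hK : (2 : K) ≠ 0) {V : Finset A} (hV : ↑V ⊆ (𝒜 1 : Set A)) :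
    Submodule.span K (V : Set A) ^ (V.card + 1) = ⊥ := by
  rw [Submodule.span_pow, Submodule.span_eq_bot]
  intro x hx
  obtain ⟨f, rfl⟩ := Set.mem_pow.mp hx
  refine h𝒜.list_prod_eq_zero_of_not_nodup hK ?_ ?_
  · simp only [List.mem_ofFn]
    rintro _ ⟨i, rfl⟩
    exact hV (f i).2
  · rw [List.nodup_ofFn]
    intro hinj
    have := Fintype.card_le_of_injective f hinj.of_comp
    simp at this

theorem top_mul_span_pow_card_succ_eq_bot (hK : (2 : K) ≠ 0) {V : Finset A}
    (hV : ↑V ⊆ (𝒜 1 : Set A)) : (⊤ * Submodule.span K (V : Set A)) ^ (V.card + 1) = ⊥ := by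
  refine le_bot_iff.mp ((Submodule.top_mul_pow_le _
    (h𝒜.mul_top_le_top_mul (Submodule.span_le.mpr hV)) _).trans ?_)
  rw [h𝒜.span_pow_card_succ_eq_bot hK hV, Submodule.mul_bot]

theorem isNilpotent_of_forall_mem_span_odd (hK : (2 : K) ≠ 0) {n : Type*} [Fintype n]
    [DecidableEq n] {F : Matrix n n A} (hF : ∀ i j, F i j ∈ Ideal.span (𝒜 1 : Set A)) :
    IsNilpotent F := by
  classical
  choose V hV hFV using fun i j ↦ Ideal.exists_finset_subset_mem_top_mul_span (K := K) (hF i j)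
  let U := Finset.univ.biUnion fun p : n × n ↦ V p.1 p.2
  have hVU : ∀ i j, V i j ⊆ U := fun i j ↦
    Finset.subset_biUnion_of_mem (fun p : n × n ↦ V p.1 p.2) (Finset.mem_univ (i, j))
  have hU : ↑U ⊆ (𝒜 1 : Set A) := by
    simpa [U, Set.subset_def] using fun x i j hx ↦ hV i j hx
  have hFU : ∀ i j, F i j ∈ ⊤ * Submodule.span K (U : Set A) := fun i j ↦
    mul_le_mul_right (Submodule.span_mono (Finset.coe_subset.mpr (hVU i j))) _ (hFV i j)
  refine ⟨U.card + 1, Matrix.ext fun i j ↦ ?_⟩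
  simpa [h𝒜.top_mul_span_pow_card_succ_eq_bot hK hU] using
    Matrix.pow_apply_mem_pow hFU (U.card + 1) i j

theorem isStablyFiniteRing (hK : (2 : K) ≠ 0) : IsStablyFiniteRing A := by
  have := h𝒜.isTwoSided_span_odd
  have := isStablyFiniteRing_of_mul_comm h𝒜.quotient_mul_comm
  refine ⟨fun n ↦ .of_ringHom_of_isNilpotent
    ((Ideal.Quotient.mk (Ideal.span (𝒜 1 : Set A))).mapMatrix (m := Fin n)) fun F hF ↦ ?_⟩
  refine h𝒜.isNilpotent_of_forall_mem_span_odd hK fun i j ↦ ?_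
  rw [← Ideal.Quotient.eq_zero_iff_mem]
  exact congrFun₂ hF i j

end Field

end IsSupercommutative

theorem surjective_endo_free_supermodule_bijective_general {K A : Type} [Field K] (hK : (2 : K) ≠ 0)
    [Ring A] [Algebra K A] (𝒜 : ZMod 2 → Submodule K A) [GradedAlgebra 𝒜]
    (hcomm : ∀ (i j : ZMod 2) (a b : A), a ∈ 𝒜 i → b ∈ 𝒜 j →
      a * b = ((-1 : K) ^ (i.val * j.val)) • (b * a))
    {M N : Type} [AddCommGroup M] [Module A M]
    [AddCommGroup N] [Module A N]
    (r s : ℕ)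
    (bM : Module.Basis (Fin r ⊕ Fin s) A M)
    (bN : Module.Basis (Fin r ⊕ Fin s) A N)
    (φ : M →ₗ[A] N)
    (hsurj : Function.Surjective φ) :
    Function.Bijective φ := by
  have : IsStablyFiniteRing A := IsSupercommutative.isStablyFiniteRing hcomm hK
  have : Module.Free A M := .of_basis bM
  have : Module.Finite A M := .of_basis bM
  let e : N ≃ₗ[A] M := bN.equiv bM (Equiv.refl _)
  have hinj : Function.Injective (e ∘ φ) :=
    Module.End.injective_of_surjective A M (f := e.toLinearMap ∘ₗ φ) (e.surjective.comp hsurj)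
  exact ⟨hinj.of_comp, hsurj⟩

/-- an epimorphism φ : M → N of free supermodules of the same finite rank
(r, s) over a supercommutative superalgebra A (char ≠ 2) is an isomorphism. -/
theorem surjective_endo_free_supermodule_bijective {K A : Type} [Field K] (hK : (2 : K) ≠ 0)
    [Ring A] [Algebra K A] (𝒜 : ZMod 2 → Submodule K A) [GradedAlgebra 𝒜]
    (hcomm : ∀ (i j : ZMod 2) (a b : A), a ∈ 𝒜 i → b ∈ 𝒜 j →
      a * b = ((-1 : K) ^ (i.val * j.val)) • (b * a))
    {M N : Type} [AddCommGroup M] [Module K M] [Module A M] [IsScalarTower K A M]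
    [AddCommGroup N] [Module K N] [Module A N] [IsScalarTower K A N]
    (ℳ : ZMod 2 → Submodule K M) [DirectSum.Decomposition ℳ]
    (𝒩 : ZMod 2 → Submodule K N) [DirectSum.Decomposition 𝒩]
    (hMgr : ∀ (i j : ZMod 2) (a : A) (m : M), a ∈ 𝒜 i → m ∈ ℳ j → a • m ∈ ℳ (i + j))
    (hNgr : ∀ (i j : ZMod 2) (a : A) (n : N), a ∈ 𝒜 i → n ∈ 𝒩 j → a • n ∈ 𝒩 (i + j))
    (r s : ℕ)
    (bM : Module.Basis (Fin r ⊕ Fin s) A M)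
    (hbM0 : ∀ i : Fin r, bM (Sum.inl i) ∈ ℳ 0) (hbM1 : ∀ j : Fin s, bM (Sum.inr j) ∈ ℳ 1)
    (bN : Module.Basis (Fin r ⊕ Fin s) A N)
    (hbN0 : ∀ i : Fin r, bN (Sum.inl i) ∈ 𝒩 0) (hbN1 : ∀ j : Fin s, bN (Sum.inr j) ∈ 𝒩 1)
    (φ : M →ₗ[A] N)
    (hgraded : ∀ (i : ZMod 2), ∀ m ∈ ℳ i, φ m ∈ 𝒩 i)
    (hsurj : Function.Surjective φ) :
    Function.Bijective φ :=
  surjective_endo_free_supermodule_bijective_general hK 𝒜 hcomm r s bM bN φ hsurj
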